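/- Combining the simulation-lemma optimality gap with the multinomial concentration bound: if M is an MDP whose transition stochasticity comes from i.i.d. draws from a categorical distribution P with support size N, and M̂ is the surrogate MDP built from the empirical distribution P̂ of n i.i.d. samples, then with probability at least 1 − δ, sup_{s∈S} (V_M^{φ*_M̂}(s) − V_M^{φ*_M}(s)) ≤ (2γ C_max / (1−γ)²) √((1/(2n)) ln(2^{N+1}/δ)). -/

import Mathlib

open MeasureTheory ProbabilityTheory Finset Real

/-!
For a fixed policy, subtracting the Bellman equations of `M` and `M̂` shows that
`Δ = maxₛ |V̂ s - V s|` satisfies `Δ ≤ γ (ε C + Δ)` whenever `‖T̂ - T‖₁ ≤ 2ε` and `V̂` takes values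
in `[0, C]`, `C = C_max / (1 - γ)`. So every policy has nearly the same value on both MDPs, and the
optimality of `φ*_M̂` on `M̂` costs at most twice that gap on `M`. Since
`‖P̂ - P‖₁ = 2 max_B (P̂ B - P B)`, it suffices that `P̂ B - P B < ε` for all `2 ^ N` events `B`;
Hoeffding's inequality bounds each failure by `exp (-2 n ε²)`, and the union bound with the chosen
`ε` leaves failure probability `δ / 2`.
-/

theorem abs_sum_sub_mul_le {ι : Type*} [Fintype ι] {p q f : ι → ℝ} {M : ℝ}
    (hpq : ∑ i, p i = ∑ i, q i) (hf : ∀ i, f i ∈ Set.Icc 0 M) :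
    |∑ i, (q i - p i) * f i| ≤ (∑ i, |q i - p i|) * M / 2 := by
  have hcentre : ∑ i, (q i - p i) * f i = ∑ i, (q i - p i) * (f i - M / 2) := by
    simp only [mul_sub, sum_sub_distrib, ← sum_mul, hpq, sub_self, zero_mul, sub_zero]
  calc |∑ i, (q i - p i) * f i| ≤ ∑ i, |(q i - p i) * (f i - M / 2)| :=
        hcentre ▸ abs_sum_le_sum_abs _ _
    _ ≤ ∑ i, |q i - p i| * (M / 2) := sum_le_sum fun i _ ↦ by
        rw [abs_mul]
        gcongr
        rw [abs_le]
        constructor <;> linarith [(hf i).1, (hf i).2]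
    _ = (∑ i, |q i - p i|) * M / 2 := by rw [← sum_mul]; ring

theorem abs_sum_mul_le_of_abs_le {ι : Type*} [Fintype ι] {p f : ι → ℝ} {D : ℝ}
    (hp : ∀ i, 0 ≤ p i) (hp1 : ∑ i, p i = 1) (hf : ∀ i, |f i| ≤ D) :
    |∑ i, p i * f i| ≤ D :=
  calc |∑ i, p i * f i| ≤ ∑ i, p i * D := (abs_sum_le_sum_abs _ _).trans <|
        sum_le_sum fun i _ ↦ by
          rw [abs_mul, abs_of_nonneg (hp i)]
          exact mul_le_mul_of_nonneg_left (hf i) (hp i)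
    _ = D := by rw [← sum_mul, hp1, one_mul]

theorem sum_abs_sub_le_of_forall_sum_sub_le {ι : Type*} [Fintype ι] {p q : ι → ℝ} {ε : ℝ}
    (hpq : ∑ i, p i = ∑ i, q i) (h : ∀ B : Finset ι, ∑ i ∈ B, (q i - p i) ≤ ε) :
    ∑ i, |q i - p i| ≤ 2 * ε := by
  have habs : ∀ x : ℝ, |x| = 2 * (if 0 < x then x else 0) - x := fun x ↦ by
    split_ifs with hx
    · rw [abs_of_pos hx]; ring
    · rw [abs_of_nonpos (not_lt.mp hx)]; ring
  have hB := h (univ.filter fun i ↦ 0 < q i - p i)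
  simp_rw [habs, sum_sub_distrib, ← mul_sum, ← sum_filter, hpq, sub_self, sub_zero]
  linarith

theorem abs_sub_le_of_bellman {S : Type*} [Fintype S] {γ ε M : ℝ} (hγ0 : 0 ≤ γ) (hγ1 : γ < 1)
    {P Q : S → S → ℝ} {c v w : S → ℝ}
    (hP : ∀ s, (∀ s', 0 ≤ P s s') ∧ ∑ s', P s s' = 1) (hQ : ∀ s, ∑ s', Q s s' = 1)
    (hPQ : ∀ s, ∑ s', |Q s s' - P s s'| ≤ 2 * ε)
    (hv : ∀ s, v s = c s + γ * ∑ s', P s s' * v s')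
    (hw : ∀ s, w s = c s + γ * ∑ s', Q s s' * w s')
    (hw_range : ∀ s, w s ∈ Set.Icc 0 M) (s : S) :
    |w s - v s| ≤ γ * ε * M / (1 - γ) := by
  have : Nonempty S := ⟨s⟩
  obtain ⟨s₀, hs₀⟩ := Finite.exists_max fun s ↦ |w s - v s|
  set D := |w s₀ - v s₀|
  have hM : 0 ≤ M := (hw_range s).1.trans (hw_range s).2
  have hstep : ∀ s, |w s - v s| ≤ γ * (ε * M + D) := fun s ↦ by
    have hsplit : w s - v s =
        γ * (∑ s', (Q s s' - P s s') * w s' + ∑ s', P s s' * (w s' - v s')) := by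
      rw [hv s, hw s]
      simp only [sub_mul, mul_sub, sum_sub_distrib]
      ring
    rw [hsplit, abs_mul, abs_of_nonneg hγ0]
    gcongr
    refine (abs_add_le _ _).trans (add_le_add ?_ (abs_sum_mul_le_of_abs_le (hP s).1 (hP s).2 hs₀))
    calc |∑ s', (Q s s' - P s s') * w s'| ≤ (∑ s', |Q s s' - P s s'|) * M / 2 :=
          abs_sum_sub_mul_le ((hP s).2.trans (hQ s).symm) hw_range
      _ ≤ 2 * ε * M / 2 := by gcongr; exact hPQ s
      _ = ε * M := by ring
  have hD : D ≤ γ * ε * M / (1 - γ) := by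
    rw [le_div_iff₀ (by linarith)]
    linarith [hstep s₀]
  exact (hs₀ s).trans hD

theorem measureReal_sum_sub_integral_ge_le {Ω ι : Type*} [MeasurableSpace Ω]
    {μ : Measure Ω} [IsProbabilityMeasure μ] {Y : ι → Ω → ℝ} (hindep : iIndepFun Y μ)
    (hmeas : ∀ j, Measurable (Y j)) (hY : ∀ j ω, Y j ω ∈ Set.Icc 0 1) (s : Finset ι)
    {t : ℝ} (ht : 0 ≤ t) :
    μ.real {ω | t ≤ ∑ j ∈ s, (Y j ω - μ[Y j])} ≤ exp (-2 * t ^ 2 / #s) := by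
  have hsubG : ∀ j ∈ s, HasSubgaussianMGF (fun ω ↦ Y j ω - μ[Y j]) ((‖(1 : ℝ) - 0‖₊ / 2) ^ 2) μ :=
    fun j _ ↦ hasSubgaussianMGF_of_mem_Icc (hmeas j).aemeasurable (ae_of_all _ (hY j))
  have hcentred : iIndepFun (fun j ↦ (fun y ↦ y - μ[Y j]) ∘ Y j) μ :=
    hindep.comp (fun j y ↦ y - μ[Y j]) fun _ ↦ measurable_id.sub_const _
  refine (HasSubgaussianMGF.measure_sum_ge_le_of_iIndepFun hcentred hsubG ht).trans_eq ?_
  congr 1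
  simp only [sum_const, nsmul_eq_mul]
  push_cast
  norm_num
  ring

section Empirical

variable {Ω α : Type*} [DecidableEq α] {n : ℕ}

noncomputable def empirical (X : Fin n → Ω → α) (ω : Ω) (i : α) : ℝ :=
  (∑ j, if X j ω = i then (1 : ℝ) else 0) / n

theorem sum_empirical (X : Fin n → Ω → α) (ω : Ω) (B : Finset α) :
    ∑ i ∈ B, empirical X ω i = (∑ j, if X j ω ∈ B then (1 : ℝ) else 0) / n := by
  simp only [empirical, ← sum_div]
  rw [sum_comm]
  simp_rw [sum_ite_eq]

theorem sum_empirical_univ [Fintype α] (hn : 0 < n) (X : Fin n → Ω → α) (ω : Ω) :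
    ∑ i, empirical X ω i = 1 := by
  rw [sum_empirical]
  simp [hn.ne']

variable [MeasurableSpace Ω] [MeasurableSpace α] [MeasurableSingletonClass α]
  {μ : Measure Ω} {P : α → ℝ} {X : Fin n → Ω → α}

theorem integral_ite_mem_eq_sum {j : Fin n} (hP : ∀ i, 0 ≤ P i) (hmeas : Measurable (X j))
    (hdist : ∀ i, μ (X j ⁻¹' {i}) = ENNReal.ofReal (P i)) (B : Finset α) :
    ∫ ω, (if X j ω ∈ B then (1 : ℝ) else 0) ∂μ = ∑ i ∈ B, P i := by
  have hB : μ (X j ⁻¹' B) = ENNReal.ofReal (∑ i ∈ B, P i) := by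
    rw [← sum_measure_preimage_singleton B fun i _ ↦ hmeas (measurableSet_singleton i),
      ENNReal.ofReal_sum_of_nonneg fun i _ ↦ hP i]
    exact sum_congr rfl fun i _ ↦ hdist i
  have : (fun ω ↦ if X j ω ∈ B then (1 : ℝ) else 0) = (X j ⁻¹' B).indicator 1 := by
    ext ω; simp [Set.indicator]
  rw [this, integral_indicator_one (hmeas B.measurableSet), measureReal_def, hB,
    ENNReal.toReal_ofReal (sum_nonneg fun i _ ↦ hP i)]

theorem measure_sum_empirical_sub_ge_le [IsProbabilityMeasure μ] [Countable α] (hn : 0 < n)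
    (hP : ∀ i, 0 ≤ P i) (hmeas : ∀ j, Measurable (X j)) (hindep : iIndepFun X μ)
    (hdist : ∀ j i, μ (X j ⁻¹' {i}) = ENNReal.ofReal (P i)) (B : Finset α) {ε : ℝ}
    (hε : 0 ≤ ε) :
    μ {ω | ε ≤ ∑ i ∈ B, (empirical X ω i - P i)} ≤ ENNReal.ofReal (exp (-2 * n * ε ^ 2)) := by
  set Y : Fin n → Ω → ℝ := fun j ω ↦ if X j ω ∈ B then 1 else 0
  have hn' : (0 : ℝ) < n := Nat.cast_pos.mpr hn
  have hY : ∀ j ω, Y j ω ∈ Set.Icc 0 1 := fun j ω ↦ by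
    by_cases h : X j ω ∈ B <;> simp [Y, h]
  have hYmeas : ∀ j, Measurable (Y j) := fun j ↦
    (measurable_of_countable (fun a ↦ if a ∈ B then (1 : ℝ) else 0)).comp (hmeas j)
  have hYindep : iIndepFun Y μ :=
    hindep.comp (fun _ a ↦ if a ∈ B then (1 : ℝ) else 0) fun _ ↦ measurable_of_countable _
  have hset : {ω | ε ≤ ∑ i ∈ B, (empirical X ω i - P i)} =
      {ω | n * ε ≤ ∑ j, (Y j ω - μ[Y j])} := by
    ext ω
    simp only [Set.mem_ofPred_eq, sum_sub_distrib, sum_empirical,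
      integral_ite_mem_eq_sum hP (hmeas _) (hdist _), sum_const, card_univ, Fintype.card_fin,
      nsmul_eq_mul, Y]
    rw [le_sub_iff_add_le, le_div_iff₀ hn']
    constructor <;> intro h <;> linarith
  rw [hset, ← ofReal_measureReal]
  refine ENNReal.ofReal_le_ofReal ((measureReal_sum_sub_integral_ge_le hYindep hYmeas
    hY univ (by positivity)).trans_eq ?_)
  simp only [card_univ, Fintype.card_fin]
  field_simp

theorem ofReal_one_sub_le_measure_forall_sum_empirical_sub_lt [IsProbabilityMeasure μ]
    [Fintype α] (hn : 0 < n) (hP : ∀ i, 0 ≤ P i) (hmeas : ∀ j, Measurable (X j))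
    (hindep : iIndepFun X μ) (hdist : ∀ j i, μ (X j ⁻¹' {i}) = ENNReal.ofReal (P i))
    {ε : ℝ} (hε : 0 ≤ ε) :
    ENNReal.ofReal (1 - 2 ^ Fintype.card α * exp (-2 * n * ε ^ 2)) ≤
      μ {ω | ∀ B : Finset α, ∑ i ∈ B, (empirical X ω i - P i) < ε} := by
  set bad : Finset α → Set Ω := fun B ↦ {ω | ε ≤ ∑ i ∈ B, (empirical X ω i - P i)}
  have hgood : {ω | ∀ B : Finset α, ∑ i ∈ B, (empirical X ω i - P i) < ε} = (⋃ B, bad B)ᶜ := by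
    ext ω
    simp [bad]
  have hunion : μ (⋃ B, bad B) ≤ ENNReal.ofReal (2 ^ Fintype.card α * exp (-2 * n * ε ^ 2)) :=
    calc μ (⋃ B, bad B) ≤ ∑ B, μ (bad B) := measure_iUnion_fintype_le μ bad
      _ ≤ ∑ _B : Finset α, ENNReal.ofReal (exp (-2 * n * ε ^ 2)) := sum_le_sum fun B _ ↦
          measure_sum_empirical_sub_ge_le hn hP hmeas hindep hdist B hε
      _ = ENNReal.ofReal (2 ^ Fintype.card α * exp (-2 * n * ε ^ 2)) := by
          rw [sum_const, card_univ, Fintype.card_finset, nsmul_eq_mul,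
            ENNReal.ofReal_mul (by positivity), ENNReal.ofReal_pow zero_le_two]
          norm_num
  rw [hgood, ENNReal.ofReal_sub _ (by positivity), ENNReal.ofReal_one, tsub_le_iff_left]
  calc 1 = μ Set.univ := measure_univ.symm
    _ ≤ μ (⋃ B, bad B) + μ (⋃ B, bad B)ᶜ := measure_univ_le_add_compl _
    _ ≤ _ := by gcongr

end Empirical

theorem stmt_5_general
    {S A : Type*} [Fintype S]
    {Ω : Type*} [MeasurableSpace Ω] (μ : Measure Ω) [IsProbabilityMeasure μ]
    (N n : ℕ) (hn : 0 < n)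
    (P : Fin N → ℝ) (hP : ∀ i, 0 ≤ P i) (hPsum : ∑ i, P i = 1)
    (X : Fin n → Ω → Fin N) (hmeas : ∀ j, Measurable (X j))
    (hindep : iIndepFun X μ)
    (hdist : ∀ j i, μ (X j ⁻¹' {i}) = ENNReal.ofReal (P i))
    (g : S → A → ℝ) (Cmax : ℝ)
    (γ : ℝ) (hγ : 0 < γ ∧ γ < 1)
    -- true kernel and, for each sample draw ω, the surrogate kernel
    (T : S → A → S → ℝ) (That : Ω → S → A → S → ℝ)
    (hT : ∀ s a, (∀ s', 0 ≤ T s a s') ∧ ∑ s', T s a s' = 1)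
    (hThat : ∀ ω s a, (∀ s', 0 ≤ That ω s a s') ∧ ∑ s', That ω s a s' = 1)
    -- the kernels differ exactly by the L1 distance between P and the empirical P̂
    (hfactor : ∀ ω s a, ∑ s', |That ω s a s' - T s a s'| =
      ∑ i, |(∑ j, if X j ω = i then (1 : ℝ) else 0) / n - P i|)
    (V : (S → A) → S → ℝ) (Vhat : Ω → (S → A) → S → ℝ)
    (hBellV : ∀ φ s, V φ s = g s (φ s) + γ * ∑ s', T s (φ s) s' * V φ s')
    (hBellVhat : ∀ ω φ s,
      Vhat ω φ s = g s (φ s) + γ * ∑ s', That ω s (φ s) s' * Vhat ω φ s')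
    (hVhatrange : ∀ ω φ s, 0 ≤ Vhat ω φ s ∧ Vhat ω φ s ≤ Cmax / (1 - γ))
    (φM : S → A) (φMhat : Ω → S → A)
    (hoptMhat : ∀ ω φ s, Vhat ω (φMhat ω) s ≤ Vhat ω φ s)
    (δ : ℝ) (hδ : 0 < δ ∧ δ < 1) :
    ENNReal.ofReal (1 - δ) ≤
      μ {ω | ∀ s, V (φMhat ω) s - V φM s ≤
        2 * γ * Cmax / (1 - γ) ^ 2 *
          Real.sqrt (1 / (2 * n) * Real.log (2 ^ (N + 1) / δ))} := by
  obtain ⟨hγ0, hγ1⟩ := hγ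
  obtain ⟨hδ0, hδ1⟩ := hδ
  set ε := sqrt (1 / (2 * n) * log (2 ^ (N + 1) / δ))
  have htail : 2 ^ N * exp (-2 * n * ε ^ 2) = δ / 2 := by
    have hlog : 0 ≤ log (2 ^ (N + 1) / δ) :=
      log_nonneg ((one_le_div hδ0).mpr (hδ1.le.trans (one_le_pow₀ one_le_two)))
    rw [sq_sqrt (by positivity), show -2 * (n : ℝ) * (1 / (2 * n) * log (2 ^ (N + 1) / δ)) =
      -log (2 ^ (N + 1) / δ) by field_simp, exp_neg, exp_log (by positivity), inv_div, pow_succ]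
    field_simp
  have hgood := ofReal_one_sub_le_measure_forall_sum_empirical_sub_lt hn hP hmeas hindep hdist
    (sqrt_nonneg _ : 0 ≤ ε)
  rw [Fintype.card_fin, htail] at hgood
  refine (ENNReal.ofReal_le_ofReal (by linarith)).trans (hgood.trans (measure_mono fun ω hω s ↦ ?_))
  have hL1 : ∀ s a, ∑ s', |That ω s a s' - T s a s'| ≤ 2 * ε := fun s a ↦ by
    rw [hfactor]
    exact sum_abs_sub_le_of_forall_sum_sub_le (hPsum.trans (sum_empirical_univ hn X ω).symm)
      fun B ↦ (hω B).le
  have hsim : ∀ φ, |Vhat ω φ s - V φ s| ≤ γ * ε * (Cmax / (1 - γ)) / (1 - γ) := fun φ ↦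
    abs_sub_le_of_bellman hγ0.le hγ1 (fun s ↦ hT s (φ s)) (fun s ↦ (hThat ω s (φ s)).2)
      (fun s ↦ hL1 s (φ s)) (hBellV φ) (hBellVhat ω φ) (hVhatrange ω φ) s
  have hopt := hoptMhat ω φM s
  have hφM := abs_le.mp (hsim φM)
  have hφMhat := abs_le.mp (hsim (φMhat ω))
  calc V (φMhat ω) s - V φM s ≤ 2 * (γ * ε * (Cmax / (1 - γ)) / (1 - γ)) := by linarith
    _ = 2 * γ * Cmax / (1 - γ) ^ 2 * ε := by field_simp

/-- Combining the simulation-lemma optimality gap with multinomial concentration: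
with probability ≥ 1-δ over the n i.i.d. samples used to build the surrogate MDP M̂,
the policy optimal for M̂ is at most (2γC_max/(1-γ)²)√((1/(2n))ln(2^{N+1}/δ))
suboptimal on the true MDP M. -/
theorem stmt_5
    {S A : Type*} [Fintype S]
    {Ω : Type*} [MeasurableSpace Ω] (μ : Measure Ω) [IsProbabilityMeasure μ]
    (N n : ℕ) (hn : 0 < n)
    (P : Fin N → ℝ) (hP : ∀ i, 0 ≤ P i) (hPsum : ∑ i, P i = 1)
    (X : Fin n → Ω → Fin N) (hmeas : ∀ j, Measurable (X j))
    (hindep : iIndepFun X μ)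
    (hdist : ∀ j i, μ (X j ⁻¹' {i}) = ENNReal.ofReal (P i))
    (g : S → A → ℝ) (Cmax : ℝ) (hg : ∀ s a, 0 ≤ g s a ∧ g s a ≤ Cmax)
    (γ : ℝ) (hγ : 0 < γ ∧ γ < 1)
    -- true kernel and, for each sample draw ω, the surrogate kernel
    (T : S → A → S → ℝ) (That : Ω → S → A → S → ℝ)
    (hT : ∀ s a, (∀ s', 0 ≤ T s a s') ∧ ∑ s', T s a s' = 1)
    (hThat : ∀ ω s a, (∀ s', 0 ≤ That ω s a s') ∧ ∑ s', That ω s a s' = 1)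
    -- the kernels differ exactly by the L1 distance between P and the empirical P̂
    (hfactor : ∀ ω s a, ∑ s', |That ω s a s' - T s a s'| =
      ∑ i, |(∑ j, if X j ω = i then (1 : ℝ) else 0) / n - P i|)
    (V : (S → A) → S → ℝ) (Vhat : Ω → (S → A) → S → ℝ)
    (hBellV : ∀ φ s, V φ s = g s (φ s) + γ * ∑ s', T s (φ s) s' * V φ s')
    (hBellVhat : ∀ ω φ s,
      Vhat ω φ s = g s (φ s) + γ * ∑ s', That ω s (φ s) s' * Vhat ω φ s')
    (hVrange : ∀ φ s, 0 ≤ V φ s ∧ V φ s ≤ Cmax / (1 - γ))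
    (hVhatrange : ∀ ω φ s, 0 ≤ Vhat ω φ s ∧ Vhat ω φ s ≤ Cmax / (1 - γ))
    (φM : S → A) (φMhat : Ω → S → A)
    (hoptM : ∀ φ s, V φM s ≤ V φ s)
    (hoptMhat : ∀ ω φ s, Vhat ω (φMhat ω) s ≤ Vhat ω φ s)
    (δ : ℝ) (hδ : 0 < δ ∧ δ < 1) :
    ENNReal.ofReal (1 - δ) ≤
      μ {ω | ∀ s, V (φMhat ω) s - V φM s ≤
        2 * γ * Cmax / (1 - γ) ^ 2 *
          Real.sqrt (1 / (2 * n) * Real.log (2 ^ (N + 1) / δ))} :=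
  stmt_5_general μ N n hn P hP hPsum X hmeas hindep hdist g Cmax γ hγ T That hT hThat hfactor V Vhat
    hBellV hBellVhat hVhatrange φM φMhat hoptMhat δ hδ
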